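/- arXiv:2303.06227 — 2 statements merged into one kernel-verified Lean document; each statement's English description precedes it below -/
import Mathlib

section
/- Under consistency of the potential outcomes, positivity, and Assumptions (A5) (counterfactual offsetting effect) and (A6) (conditional counterfactual parallel trends with the neighboring controls), the inverse-probability-weighted functional identifies δ: E[ (e_T(X)/p_T) · ( 1{G=N}/e_N(X) − 1{G=C}/e_C(X) ) · ΔY ] = δ, where δ := E[(Y₁^{(1,1)} − Y₁^{(1,0)})·1{G=T}]/p_T. (Population version of Lemma 1: the IPW estimator is consistent for the negative offsetting effect δ.) -/
open MeasureTheory ProbabilityTheory Filter Topology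

/-- Group label: `T` = treated (`g(A)=(1,0)`), `N` = neighboring control (`g(A)=(0,1)`),
`C` = non-neighboring control (`g(A)=(0,0)`). -/
inductive GLabel : Type
  | T | N | C
  deriving DecidableEq

instance : MeasurableSpace GLabel := ⊤

/-- The σ-algebra `𝔛` generated by the covariates `X`. -/
def sigmaX {Ω : Type} {q : ℕ} (X : Ω → (Fin q → ℝ)) : MeasurableSpace Ω :=
  MeasurableSpace.comap X inferInstance

/-- The indicator `1{G = g}` as a real-valued function. -/
def indG {Ω : Type} (G : Ω → GLabel) (g : GLabel) (ω : Ω) : ℝ :=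
  if G ω = g then 1 else 0

/-- `f` is a version of the conditional expectation `E[Z ∣ G = g, X]`:
it is measurable and `E[Z·1{G=g} ∣ 𝔛] = f(X)·e_g(X)` `P`-a.s. -/
def IsCondVersion {Ω : Type} [MeasurableSpace Ω] (P : Measure Ω) {q : ℕ}
    (X : Ω → (Fin q → ℝ)) (G : Ω → GLabel) (e : GLabel → (Fin q → ℝ) → ℝ)
    (g : GLabel) (Z : Ω → ℝ) (f : (Fin q → ℝ) → ℝ) : Prop :=
  Measurable f ∧
    P[(fun ω => Z ω * indG G g ω) | sigmaX X] =ᵐ[P] (fun ω => f (X ω) * e g (X ω))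

/-! Each inverse-probability-weighted arm is handled by conditioning on `X`: the weight
`e_T(X) / e_g(X)` is `σ(X)`-measurable and, by positivity, bounded, so it passes through
`E[· ∣ X]`, and the propensity `e_g(X)` cancels against the one in the version `f_g(X) e_g(X)`.
By consistency, `ΔY` on the neighboring controls is the spillover `Y₁^{(0,1)} − Y₁^{(0,0)}` plus
the untreated trend, and on the non-neighboring controls it is the trend alone; (A6) cancels the
two trends, and (A5) turns the remaining `∫ e_T(X) f_N(X)` into
`−∫ e_T(X) f_T(X) = E[(Y₁^{(1,1)} − Y₁^{(1,0)}) 1{G=T}]`. -/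

theorem integral_mul_eq_integral_mul_of_condExp_ae_eq {Ω : Type*} {m mΩ : MeasurableSpace Ω}
    {μ : Measure Ω} [IsFiniteMeasure μ] (hm : m ≤ mΩ) {h Z v : Ω → ℝ}
    (hh : StronglyMeasurable[m] h) {c : ℝ} (hh_bound : ∀ᵐ ω ∂μ, ‖h ω‖ ≤ c)
    (hZ : Integrable Z μ) (hv : μ[Z | m] =ᵐ[μ] v) :
    ∫ ω, h ω * Z ω ∂μ = ∫ ω, h ω * v ω ∂μ := by
  rw [← integral_condExp hm]
  refine integral_congr_ae ((condExp_stronglyMeasurable_mul_of_bound hm hh hZ c hh_bound).trans ?_)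
  filter_upwards [hv] with ω hω
  simp [hω]

section Propensity

variable {Ω : Type} [MeasurableSpace Ω] {P : Measure Ω} {q : ℕ}
  {X : Ω → (Fin q → ℝ)} {G : Ω → GLabel} {e : GLabel → (Fin q → ℝ) → ℝ} {g : GLabel}
  {Z : Ω → ℝ} {f f' k : (Fin q → ℝ) → ℝ} {ε C : ℝ}

theorem integrable_mul_indG (hG : Measurable G) (hZ : Integrable Z P) (g : GLabel) :
    Integrable (fun ω => Z ω * indG G g ω) P := by
  refine (hZ.indicator (hG (measurableSet_singleton g))).congr (Eventually.of_forall fun ω => ?_)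
  by_cases hω : G ω = g <;> simp [indG, Set.indicator, hω]

theorem IsCondVersion.integral_mul_indG [IsFiniteMeasure P] (hX : Measurable X)
    (hf : IsCondVersion P X G e g Z f) :
    ∫ ω, Z ω * indG G g ω ∂P = ∫ ω, f (X ω) * e g (X ω) ∂P := by
  rw [← integral_condExp hX.comap_le]
  exact integral_congr_ae hf.2

theorem IsCondVersion.integral_sub_mul_indG_of_add_eq_zero [IsFiniteMeasure P] {Y Y' : Ω → ℝ}
    (hX : Measurable X) (hf : IsCondVersion P X G e g (fun ω => Y ω - Y' ω) f)
    (hff' : ∀ᵐ ω ∂P, f (X ω) + f' (X ω) = 0) :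
    ∫ ω, (Y' ω - Y ω) * indG G g ω ∂P = ∫ ω, e g (X ω) * f' (X ω) ∂P := calc
  _ = -∫ ω, (Y ω - Y' ω) * indG G g ω ∂P := by
    rw [← integral_neg]
    exact integral_congr_ae (Eventually.of_forall fun ω => by ring)
  _ = -∫ ω, f (X ω) * e g (X ω) ∂P := by rw [hf.integral_mul_indG hX]
  _ = _ := by
    rw [← integral_neg]
    exact integral_congr_ae (hff'.mono fun ω h => by linear_combination -e g (X ω) * h)

theorem norm_div_propensity_le (hε : 0 < ε) (hpos : ∀ x, ε ≤ e g x)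
    (hk : ∀ x, ‖k x‖ ≤ C) (x : Fin q → ℝ) : ‖k x / e g x‖ ≤ C / ε := by
  rw [norm_div, Real.norm_of_nonneg (hε.trans_le (hpos x)).le]
  exact div_le_div₀ ((norm_nonneg _).trans (hk x)) (hk x) hε (hpos x)

theorem integrable_ipw (hX : Measurable X) (hG : Measurable G) (he : Measurable (e g))
    (hε : 0 < ε) (hpos : ∀ x, ε ≤ e g x) (hk : Measurable k) (hkC : ∀ x, ‖k x‖ ≤ C)
    (hZ : Integrable Z P) :
    Integrable (fun ω => k (X ω) / e g (X ω) * (Z ω * indG G g ω)) P :=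
  (integrable_mul_indG hG hZ g).bdd_mul ((hk.div he).comp hX).aestronglyMeasurable
    (Eventually.of_forall fun ω => norm_div_propensity_le hε hpos hkC (X ω))

theorem IsCondVersion.integral_ipw [IsFiniteMeasure P] (hX : Measurable X) (hG : Measurable G)
    (he : Measurable (e g)) (hε : 0 < ε) (hpos : ∀ x, ε ≤ e g x) (hk : Measurable k)
    (hkC : ∀ x, ‖k x‖ ≤ C) (hZ : Integrable Z P) (hf : IsCondVersion P X G e g Z f) :
    ∫ ω, k (X ω) / e g (X ω) * (Z ω * indG G g ω) ∂P = ∫ ω, k (X ω) * f (X ω) ∂P := by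
  rw [integral_mul_eq_integral_mul_of_condExp_ae_eq (h := fun ω => k (X ω) / e g (X ω))
    hX.comap_le ((hk.div he).comp (comap_measurable X)).stronglyMeasurable
    (Eventually.of_forall fun ω => norm_div_propensity_le hε hpos hkC (X ω))
    (integrable_mul_indG hG hZ g) hf.2]
  refine integral_congr_ae (Eventually.of_forall fun ω => ?_)
  have he_ne : e g (X ω) ≠ 0 := (hε.trans_le (hpos _)).ne'
  field_simp

theorem ipw_integrand_ae_eq_arms {Y0 Y1 Y101 Y100 Y000 w wN wC : Ω → ℝ} (p : ℝ)
    (hconsN : ∀ᵐ ω ∂P, G ω = GLabel.N → Y1 ω = Y101 ω)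
    (hconsC : ∀ᵐ ω ∂P, G ω = GLabel.C → Y1 ω = Y100 ω) (hcons0 : Y0 =ᵐ[P] Y000) :
    (fun ω => w ω / p * (indG G GLabel.N ω / wN ω - indG G GLabel.C ω / wC ω) * (Y1 ω - Y0 ω))
      =ᵐ[P] fun ω => p⁻¹ * (w ω / wN ω * ((Y101 ω - Y100 ω) * indG G GLabel.N ω)
        + w ω / wN ω * ((Y100 ω - Y000 ω) * indG G GLabel.N ω)
        - w ω / wC ω * ((Y100 ω - Y000 ω) * indG G GLabel.C ω)) := by
  filter_upwards [hconsN, hconsC, hcons0] with ω hN hC h0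
  cases hω : G ω <;> simp [indG, hω, hN, hC, h0] <;> ring

end Propensity

theorem stmt_0_general
    {Ω : Type} [MeasurableSpace Ω] (P : Measure Ω) [IsProbabilityMeasure P]
    {q : ℕ} (X : Ω → (Fin q → ℝ)) (hX : Measurable X)
    (G : Ω → GLabel) (hG : Measurable G)
    (Y0 Y1 : Ω → ℝ)
    (e : GLabel → (Fin q → ℝ) → ℝ) (he : ∀ g, Measurable (e g))
    (he1 : ∀ g x, e g x ≤ 1)
    (ε : ℝ) (hε : 0 < ε) (hpos : ∀ g x, ε ≤ e g x)
    (Y110 Y111 Y101 Y100 Y000 : Ω → ℝ)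
    (hI01 : Integrable Y101 P) (hI00 : Integrable Y100 P) (hI000 : Integrable Y000 P)
    (hconsN : ∀ᵐ ω ∂P, G ω = GLabel.N → Y1 ω = Y101 ω)
    (hconsC : ∀ᵐ ω ∂P, G ω = GLabel.C → Y1 ω = Y100 ω)
    (hcons0 : Y0 =ᵐ[P] Y000)
    (fT fN : (Fin q → ℝ) → ℝ)
    (hfT : IsCondVersion P X G e GLabel.T (fun ω => Y110 ω - Y111 ω) fT)
    (hfN : IsCondVersion P X G e GLabel.N (fun ω => Y101 ω - Y100 ω) fN)
    (hA5 : ∀ᵐ ω ∂P, fT (X ω) + fN (X ω) = 0)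
    (gN gC : (Fin q → ℝ) → ℝ)
    (hgN : IsCondVersion P X G e GLabel.N (fun ω => Y100 ω - Y000 ω) gN)
    (hgC : IsCondVersion P X G e GLabel.C (fun ω => Y100 ω - Y000 ω) gC)
    (hA6 : ∀ᵐ ω ∂P, gN (X ω) = gC (X ω))
    :
    ∫ ω, (e GLabel.T (X ω) / (P {ω | G ω = GLabel.T}).toReal) *
        (indG G GLabel.N ω / e GLabel.N (X ω) - indG G GLabel.C ω / e GLabel.C (X ω)) *
        (Y1 ω - Y0 ω) ∂P
      = (∫ ω, (Y111 ω - Y110 ω) * indG G GLabel.T ω ∂P) / (P {ω | G ω = GLabel.T}).toReal := by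
  have heT : ∀ x, ‖e GLabel.T x‖ ≤ 1 := fun x => by
    rw [Real.norm_of_nonneg (hε.trans_le (hpos GLabel.T x)).le]
    exact he1 GLabel.T x
  have hZ01 : Integrable (fun ω => Y101 ω - Y100 ω) P := hI01.sub hI00
  have hZ00 : Integrable (fun ω => Y100 ω - Y000 ω) P := hI00.sub hI000
  have ipw {g : GLabel} {Z : Ω → ℝ} (hZ : Integrable Z P) :=
    integrable_ipw hX hG (he g) hε (hpos g) (he GLabel.T) heT hZ
  have hA6_int : ∫ ω, e GLabel.T (X ω) * gN (X ω) ∂P = ∫ ω, e GLabel.T (X ω) * gC (X ω) ∂P :=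
    integral_congr_ae (hA6.mono fun ω h => congrArg (e GLabel.T (X ω) * ·) h)
  rw [integral_congr_ae (ipw_integrand_ae_eq_arms _ hconsN hconsC hcons0), integral_const_mul,
    integral_sub (by exact (ipw hZ01).add (ipw hZ00)) (ipw hZ00),
    integral_add (ipw hZ01) (ipw hZ00),
    hfN.integral_ipw hX hG (he _) hε (hpos _) (he _) heT hZ01,
    hgN.integral_ipw hX hG (he _) hε (hpos _) (he _) heT hZ00,
    hgC.integral_ipw hX hG (he _) hε (hpos _) (he _) heT hZ00, hA6_int, add_sub_cancel_right,
    hfT.integral_sub_mul_indG_of_add_eq_zero hX hA5, inv_mul_eq_div]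

theorem stmt_0
    {Ω : Type} [MeasurableSpace Ω] (P : Measure Ω) [IsProbabilityMeasure P]
    {q : ℕ} (X : Ω → (Fin q → ℝ)) (hX : Measurable X)
    (G : Ω → GLabel) (hG : Measurable G)
    (Y0 Y1 : Ω → ℝ) (hY0 : Integrable Y0 P) (hY1 : Integrable Y1 P)
    (e : GLabel → (Fin q → ℝ) → ℝ) (he : ∀ g, Measurable (e g))
    (he1 : ∀ g x, e g x ≤ 1)
    (hprop : ∀ g : GLabel,
      P[(fun ω => indG G g ω) | sigmaX X] =ᵐ[P] (fun ω => e g (X ω)))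
    (ε : ℝ) (hε : 0 < ε) (hpos : ∀ g x, ε ≤ e g x)
    (hpT : 0 < (P {ω | G ω = GLabel.T}).toReal)
    (Y110 Y111 Y101 Y100 Y000 : Ω → ℝ)
    (hI10 : Integrable Y110 P) (hI11 : Integrable Y111 P)
    (hI01 : Integrable Y101 P) (hI00 : Integrable Y100 P) (hI000 : Integrable Y000 P)
    (hconsT : ∀ᵐ ω ∂P, G ω = GLabel.T → Y1 ω = Y110 ω)
    (hconsN : ∀ᵐ ω ∂P, G ω = GLabel.N → Y1 ω = Y101 ω)
    (hconsC : ∀ᵐ ω ∂P, G ω = GLabel.C → Y1 ω = Y100 ω)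
    (hcons0 : Y0 =ᵐ[P] Y000)
    (fT fN : (Fin q → ℝ) → ℝ)
    (hfT : IsCondVersion P X G e GLabel.T (fun ω => Y110 ω - Y111 ω) fT)
    (hfN : IsCondVersion P X G e GLabel.N (fun ω => Y101 ω - Y100 ω) fN)
    (hA5 : ∀ᵐ ω ∂P, fT (X ω) + fN (X ω) = 0)
    (gN gC : (Fin q → ℝ) → ℝ)
    (hgN : IsCondVersion P X G e GLabel.N (fun ω => Y100 ω - Y000 ω) gN)
    (hgC : IsCondVersion P X G e GLabel.C (fun ω => Y100 ω - Y000 ω) gC)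
    (hA6 : ∀ᵐ ω ∂P, gN (X ω) = gC (X ω))
    :
    ∫ ω, (e GLabel.T (X ω) / (P {ω | G ω = GLabel.T}).toReal) *
        (indG G GLabel.N ω / e GLabel.N (X ω) - indG G GLabel.C ω / e GLabel.C (X ω)) *
        (Y1 ω - Y0 ω) ∂P
      = (∫ ω, (Y111 ω - Y110 ω) * indG G GLabel.T ω ∂P) / (P {ω | G ω = GLabel.T}).toReal :=
  stmt_0_general P X hX G hG Y0 Y1 e he he1 ε hε hpos Y110 Y111 Y101 Y100 Y000 hI01 hI00 hI000
    hconsN hconsC hcons0 fT fN hfT hfN hA5 gN gC hgN hgC hA6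
end

section
/- Under consistency of the potential outcomes and Assumption (A6) (conditional counterfactual parallel trends with the neighboring controls), for any versions Δμ_N of E[ΔY ∣ G=N, X], Δμ_C of E[ΔY ∣ G=C, X], and f of E[Y₁^{(0,1)} − Y₁^{(0,0)} ∣ G=N, X], one has Δμ_N(X) − Δμ_C(X) = f(X) P-almost surely. (Identification of the conditional spillover effect on neighboring controls as the contrast of observed conditional outcome trends.) -/
open MeasureTheory ProbabilityTheory Filter Topology

/-!
On `{G = N}` consistency gives `ΔY = (Y₁^{(0,1)} - Y₁^{(0,0)}) + (Y₁^{(0,0)} - Y₀^{(0,0)})`, and on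
`{G = C}` it gives `ΔY = Y₁^{(0,0)} - Y₀^{(0,0)}`. Versions of `E[· ∣ G = g, X]` are additive and
only see the variable on `{G = g}`, and by positivity of `e_g` they are unique `P`-a.s. along `X`.
Hence `Δμ_N(X) = f(X) + E[Y₁^{(0,0)} - Y₀^{(0,0)} ∣ G=N, X]` and
`Δμ_C(X) = E[Y₁^{(0,0)} - Y₀^{(0,0)} ∣ G=C, X]`, and (A6) cancels the two trend terms.
-/

lemma measurable_indG {Ω : Type} [MeasurableSpace Ω] {G : Ω → GLabel} (hG : Measurable G)
    (g : GLabel) : Measurable (indG G g) :=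
  Measurable.ite (hG (measurableSet_singleton g)) measurable_const measurable_const

lemma MeasureTheory.Integrable.mul_indG {Ω : Type} [MeasurableSpace Ω] {P : Measure Ω} {Z : Ω → ℝ}
    (hZ : Integrable Z P) {G : Ω → GLabel} (hG : Measurable G) (g : GLabel) :
    Integrable (fun ω => Z ω * indG G g ω) P :=
  hZ.mul_bdd (c := 1) (measurable_indG hG g).aestronglyMeasurable <|
    Eventually.of_forall fun ω => by unfold indG; split_ifs <;> simp

namespace IsCondVersion

variable {Ω : Type} [MeasurableSpace Ω] {P : Measure Ω} {q : ℕ} {X : Ω → (Fin q → ℝ)}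
  {G : Ω → GLabel} {e : GLabel → (Fin q → ℝ) → ℝ} {g : GLabel}

lemma add {Z₁ Z₂ : Ω → ℝ} {f₁ f₂ : (Fin q → ℝ) → ℝ}
    (h₁ : IsCondVersion P X G e g Z₁ f₁) (h₂ : IsCondVersion P X G e g Z₂ f₂)
    (hZ₁ : Integrable Z₁ P) (hZ₂ : Integrable Z₂ P) (hG : Measurable G) :
    IsCondVersion P X G e g (fun ω => Z₁ ω + Z₂ ω) (f₁ + f₂) := by
  refine ⟨h₁.1.add h₂.1, ?_⟩
  have hsplit : (fun ω => (Z₁ ω + Z₂ ω) * indG G g ω) =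
      (fun ω => Z₁ ω * indG G g ω) + fun ω => Z₂ ω * indG G g ω := by
    ext ω; exact add_mul ..
  rw [hsplit]
  filter_upwards [condExp_add (hZ₁.mul_indG hG g) (hZ₂.mul_indG hG g) (sigmaX X), h₁.2, h₂.2]
    with ω hadd hω₁ hω₂
  rw [hadd, Pi.add_apply, hω₁, hω₂, Pi.add_apply, add_mul]

lemma congr_on {Z Z' : Ω → ℝ} {f : (Fin q → ℝ) → ℝ} (h : IsCondVersion P X G e g Z f)
    (hZ : ∀ᵐ ω ∂P, G ω = g → Z ω = Z' ω) : IsCondVersion P X G e g Z' f := by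
  refine ⟨h.1, (condExp_congr_ae ?_).symm.trans h.2⟩
  filter_upwards [hZ] with ω hω
  unfold indG
  split_ifs with hg
  · rw [hω hg]
  · simp

lemma ae_eq {Z : Ω → ℝ} {f f' : (Fin q → ℝ) → ℝ} (h : IsCondVersion P X G e g Z f)
    (h' : IsCondVersion P X G e g Z f') (he : ∀ᵐ ω ∂P, e g (X ω) ≠ 0) :
    ∀ᵐ ω ∂P, f (X ω) = f' (X ω) := by
  filter_upwards [h.2.symm.trans h'.2, he] with ω hω hne
  exact mul_right_cancel₀ hne hω

end IsCondVersion

theorem stmt_4_general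
    {Ω : Type} [MeasurableSpace Ω] (P : Measure Ω)
    {q : ℕ} (X : Ω → (Fin q → ℝ))
    (G : Ω → GLabel) (hG : Measurable G)
    (Y0 Y1 : Ω → ℝ)
    (e : GLabel → (Fin q → ℝ) → ℝ)
    (ε : ℝ) (hε : 0 < ε) (hpos : ∀ g x, ε ≤ e g x)
    (Y101 Y100 Y000 : Ω → ℝ)
    (hI01 : Integrable Y101 P) (hI00 : Integrable Y100 P) (hI000 : Integrable Y000 P)
    (hconsN : ∀ᵐ ω ∂P, G ω = GLabel.N → Y1 ω = Y101 ω)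
    (hconsC : ∀ᵐ ω ∂P, G ω = GLabel.C → Y1 ω = Y100 ω)
    (hcons0 : Y0 =ᵐ[P] Y000)
    (gN gC : (Fin q → ℝ) → ℝ)
    (hgN : IsCondVersion P X G e GLabel.N (fun ω => Y100 ω - Y000 ω) gN)
    (hgC : IsCondVersion P X G e GLabel.C (fun ω => Y100 ω - Y000 ω) gC)
    (hA6 : ∀ᵐ ω ∂P, gN (X ω) = gC (X ω))
    (ΔμN ΔμC : (Fin q → ℝ) → ℝ)
    (hΔμN : IsCondVersion P X G e GLabel.N (fun ω => Y1 ω - Y0 ω) ΔμN)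
    (hΔμC : IsCondVersion P X G e GLabel.C (fun ω => Y1 ω - Y0 ω) ΔμC)
    (f : (Fin q → ℝ) → ℝ)
    (hf : IsCondVersion P X G e GLabel.N (fun ω => Y101 ω - Y100 ω) f)
    :
    ∀ᵐ ω ∂P, ΔμN (X ω) - ΔμC (X ω) = f (X ω) := by
  have he : ∀ g, ∀ᵐ ω ∂P, e g (X ω) ≠ 0 := fun g =>
    Eventually.of_forall fun ω => (hε.trans_le (hpos g (X ω))).ne'
  have hN : IsCondVersion P X G e GLabel.N (fun ω => Y1 ω - Y0 ω) (f + gN) := by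
    refine (hf.add hgN (hI01.sub hI00) (hI00.sub hI000) hG).congr_on ?_
    filter_upwards [hconsN, hcons0] with ω h1 h0 hNω
    rw [h1 hNω, h0]; ring
  have hC : IsCondVersion P X G e GLabel.C (fun ω => Y1 ω - Y0 ω) gC := by
    refine hgC.congr_on ?_
    filter_upwards [hconsC, hcons0] with ω h1 h0 hCω
    rw [h1 hCω, h0]
  filter_upwards [hΔμN.ae_eq hN (he _), hΔμC.ae_eq hC (he _), hA6] with ω h1 h2 h3
  rw [h1, h2, Pi.add_apply, h3]
  ring

theorem stmt_4
    {Ω : Type} [MeasurableSpace Ω] (P : Measure Ω) [IsProbabilityMeasure P]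
    {q : ℕ} (X : Ω → (Fin q → ℝ)) (hX : Measurable X)
    (G : Ω → GLabel) (hG : Measurable G)
    (Y0 Y1 : Ω → ℝ) (hY0 : Integrable Y0 P) (hY1 : Integrable Y1 P)
    (e : GLabel → (Fin q → ℝ) → ℝ) (he : ∀ g, Measurable (e g))
    (he1 : ∀ g x, e g x ≤ 1)
    (hprop : ∀ g : GLabel,
      P[(fun ω => indG G g ω) | sigmaX X] =ᵐ[P] (fun ω => e g (X ω)))
    (ε : ℝ) (hε : 0 < ε) (hpos : ∀ g x, ε ≤ e g x)
    (Y110 Y111 Y101 Y100 Y000 : Ω → ℝ)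
    (hI10 : Integrable Y110 P) (hI11 : Integrable Y111 P)
    (hI01 : Integrable Y101 P) (hI00 : Integrable Y100 P) (hI000 : Integrable Y000 P)
    (hconsT : ∀ᵐ ω ∂P, G ω = GLabel.T → Y1 ω = Y110 ω)
    (hconsN : ∀ᵐ ω ∂P, G ω = GLabel.N → Y1 ω = Y101 ω)
    (hconsC : ∀ᵐ ω ∂P, G ω = GLabel.C → Y1 ω = Y100 ω)
    (hcons0 : Y0 =ᵐ[P] Y000)
    (gN gC : (Fin q → ℝ) → ℝ)
    (hgN : IsCondVersion P X G e GLabel.N (fun ω => Y100 ω - Y000 ω) gN)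
    (hgC : IsCondVersion P X G e GLabel.C (fun ω => Y100 ω - Y000 ω) gC)
    (hA6 : ∀ᵐ ω ∂P, gN (X ω) = gC (X ω))
    (ΔμN ΔμC : (Fin q → ℝ) → ℝ)
    (hΔμN : IsCondVersion P X G e GLabel.N (fun ω => Y1 ω - Y0 ω) ΔμN)
    (hΔμC : IsCondVersion P X G e GLabel.C (fun ω => Y1 ω - Y0 ω) ΔμC)
    (f : (Fin q → ℝ) → ℝ)
    (hf : IsCondVersion P X G e GLabel.N (fun ω => Y101 ω - Y100 ω) f)
    :
    ∀ᵐ ω ∂P, ΔμN (X ω) - ΔμC (X ω) = f (X ω) :=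
  stmt_4_general P X G hG Y0 Y1 e ε hε hpos Y101 Y100 Y000 hI01 hI00 hI000 hconsN hconsC hcons0 gN
    gC hgN hgC hA6 ΔμN ΔμC hΔμN hΔμC f hf
end
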